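/- Let d ≥ 1, m > 1, k := d/((m−1)d + 2), a ≠ 0, τ > 0, and define Barenblatt's function u(t,x) := (t+τ)^{−k} [ a² − (k(m−1)/(2md)) |x|² (t+τ)^{−2k/d} ]₊^{1/(m−1)} for t ≥ 0 and x ∈ ℝ^d, where [s]₊ = max{s,0}. Then on the open set { (t,x) : a² − (k(m−1)/(2md)) |x|² (t+τ)^{−2k/d} > 0 }, the function u is smooth, positive, and satisfies the porous medium equation ∂_t u = Δ_x (u^m) classically. -/

import Mathlib

open Real Filter Topology

/-- Barenblatt's function
`u(t,x) = (t+τ)^{−k} [a² − (k(m−1)/(2md)) |x|² (t+τ)^{−2k/d}]₊^{1/(m−1)}`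
with `m > 1`, `k = d/((m−1)d+2)`, `a ≠ 0`, `τ > 0`, is smooth and positive on the set
where `t ≥ 0` and the bracket is positive, and there it satisfies the porous medium
equation `∂_t u = Δ_x(u^m)` classically. -/
theorem barenblatt_solves_porous_medium
    (d : ℕ) (hd : 1 ≤ d) (m : ℝ) (hm : 1 < m)
    (k : ℝ) (hk : k = (d : ℝ) / ((m - 1) * d + 2))
    (a τ : ℝ) (ha : a ≠ 0) (hτ : 0 < τ)
    (u : ℝ → EuclideanSpace ℝ (Fin d) → ℝ)
    (hu : ∀ (t : ℝ) (x : EuclideanSpace ℝ (Fin d)),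
      u t x = (t + τ) ^ (-k) *
        (max (a ^ 2 - k * (m - 1) / (2 * m * d) * ‖x‖ ^ 2 * (t + τ) ^ (-(2 * k / d))) 0)
          ^ (1 / (m - 1))) :
    letI S : Set (ℝ × EuclideanSpace ℝ (Fin d)) :=
      {q | 0 ≤ q.1 ∧
        0 < a ^ 2 - k * (m - 1) / (2 * m * d) * ‖q.2‖ ^ 2 * (q.1 + τ) ^ (-(2 * k / d))}
    ContDiffOn ℝ (⊤ : ℕ∞) (fun q : ℝ × EuclideanSpace ℝ (Fin d) => u q.1 q.2) S ∧
    (∀ q ∈ S, 0 < u q.1 q.2) ∧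
    (∀ q ∈ S,
      deriv (fun s => u s q.2) q.1 =
        ∑ j : Fin d, fderiv ℝ (fun y => fderiv ℝ (fun z => u q.1 z ^ m) y
          (EuclideanSpace.single j 1)) q.2 (EuclideanSpace.single j 1)) := by
  classical
  set c : ℝ := k * (m - 1) / (2 * m * d) with hc
  set β : ℝ := 2 * k / d with hβ
  -- basic numeric facts
  have hd0 : (0:ℝ) < d := by exact_mod_cast hd
  have hm1 : (0:ℝ) < m - 1 := by linarith
  have hm0 : (0:ℝ) < m := by linarith
  have hden : (0:ℝ) < (m - 1) * d + 2 := by positivity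
  have hkpos : 0 < k := by rw [hk]; positivity
  set q' : ℝ := 1 / (m - 1) with hq'
  set p : ℝ := m / (m - 1) with hp
  have hq'm : q' * m = p := by rw [hq', hp]; ring
  have hpq : p - 1 = q' := by rw [hp, hq']; field_simp; ring
  have id1 : k = 2 * d * p * c := by rw [hp, hc]; field_simp
  have id2 : β = 4 * p * c := by rw [hβ, hp, hc]; field_simp; ring
  have id3 : (-k) * m + (-β) = -k - 1 := by
    have h : k * ((m - 1) * d + 2) = d := by rw [hk]; field_simp
    rw [hβ]; field_simp; nlinarith [h]
  -- Euclidean geometry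
  have hnorm : ∀ z : EuclideanSpace ℝ (Fin d), ‖z‖ ^ 2 = ∑ j, z j ^ 2 := by
    intro z
    rw [EuclideanSpace.norm_eq, Real.sq_sqrt (by positivity)]
    simp [sq_abs]
  set N : EuclideanSpace ℝ (Fin d) → ℝ := fun z => ∑ j, z j ^ 2 with hNdef
  set L : EuclideanSpace ℝ (Fin d) → (EuclideanSpace ℝ (Fin d) →L[ℝ] ℝ) :=
    fun y => ∑ j, (2 * y j) • (EuclideanSpace.proj j : EuclideanSpace ℝ (Fin d) →L[ℝ] ℝ) with hLdef
  have hNfd : ∀ y : EuclideanSpace ℝ (Fin d), HasFDerivAt N (L y) y := by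
    intro y
    apply HasFDerivAt.fun_sum
    intro i _
    have h1 : HasFDerivAt (fun z : EuclideanSpace ℝ (Fin d) => z i)
        (EuclideanSpace.proj (𝕜 := ℝ) i) y := (EuclideanSpace.proj (𝕜 := ℝ) i).hasFDerivAt
    have h2 : HasFDerivAt (fun z : EuclideanSpace ℝ (Fin d) => z i * z i)
        (y i • EuclideanSpace.proj (𝕜 := ℝ) i + y i • EuclideanSpace.proj (𝕜 := ℝ) i) y := h1.mul h1
    have e : (fun z : EuclideanSpace ℝ (Fin d) => z i ^ 2) = fun z => z i * z i := by ext z; ring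
    rw [e]
    refine h2.congr_fderiv ?_
    · ext v
      simp only [ContinuousLinearMap.smul_apply, ContinuousLinearMap.add_apply, smul_eq_mul]
      show _ = 2 * y i * (EuclideanSpace.proj (𝕜 := ℝ) i) v
      ring
  have happly : ∀ (y : EuclideanSpace ℝ (Fin d)) (i : Fin d),
      L y (EuclideanSpace.single i 1) = 2 * y i := by
    intro y i
    rw [hLdef]
    rw [ContinuousLinearMap.sum_apply]
    rw [Finset.sum_eq_single i]
    · simp [EuclideanSpace.single_apply]
    · intro j _ hj
      simp [EuclideanSpace.single_apply, hj]
    · simp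
  have hNcont : Continuous N := by
    apply continuous_finset_sum
    intro i _
    exact ((EuclideanSpace.proj (𝕜 := ℝ) i).continuous).pow 2
  have hNsmooth : ContDiff ℝ (⊤ : WithTop ℕ∞) N := by
    apply ContDiff.sum
    intro i _
    exact ((EuclideanSpace.proj (𝕜 := ℝ) i).contDiff).pow 2
  -- the open set U
  set U : Set (ℝ × EuclideanSpace ℝ (Fin d)) :=
    {q | -τ < q.1} ∩ (fun q : ℝ × EuclideanSpace ℝ (Fin d) =>
      a ^ 2 - c * N q.2 * (q.1 + τ) ^ (-β)) ⁻¹' Set.Ioi 0 with hUdef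
  have hmemU : ∀ q : ℝ × EuclideanSpace ℝ (Fin d),
      q ∈ U ↔ -τ < q.1 ∧ 0 < a ^ 2 - c * N q.2 * (q.1 + τ) ^ (-β) := by
    intro q
    simp [hUdef, Set.mem_setOf_eq]
  have hUopen : IsOpen U := by
    apply ContinuousOn.isOpen_inter_preimage _ (isOpen_lt continuous_const continuous_fst) isOpen_Ioi
    apply ContinuousOn.sub continuousOn_const
    apply ContinuousOn.mul
    · exact (continuous_const.mul (hNcont.comp continuous_snd)).continuousOn
    · apply ContinuousOn.rpow_const
      · exact (continuous_fst.add continuous_const).continuousOn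
      · intro q hq
        left
        have : -τ < q.1 := hq
        intro h0
        linarith
  have hSU : ∀ q : ℝ × EuclideanSpace ℝ (Fin d),
      (0 ≤ q.1 ∧ 0 < a ^ 2 - c * ‖q.2‖ ^ 2 * (q.1 + τ) ^ (-β)) → q ∈ U := by
    intro q hq
    rw [hmemU]
    refine ⟨by linarith [hq.1], ?_⟩
    have := hq.2
    rwa [hnorm q.2] at this
  have hug : ∀ q ∈ U, u q.1 q.2 = (q.1 + τ) ^ (-k) * (a ^ 2 - c * N q.2 * (q.1 + τ) ^ (-β)) ^ q' := by
    intro q hq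
    rw [hmemU] at hq
    rw [hu, hnorm]
    rw [max_eq_left hq.2.le]
  constructor
  · -- smoothness
    apply ContDiffOn.mono (s := U)
    · apply ContDiffOn.congr _ hug
      intro q hq
      rw [hmemU] at hq
      apply ContDiffAt.contDiffWithinAt
      have hT : 0 < q.1 + τ := by linarith [hq.1]
      have hbase : ContDiffAt ℝ (⊤ : WithTop ℕ∞) (fun q : ℝ × EuclideanSpace ℝ (Fin d) => q.1 + τ) q :=
        (contDiff_fst.add contDiff_const).contDiffAt
      have hA : ContDiffAt ℝ (⊤ : WithTop ℕ∞) (fun q : ℝ × EuclideanSpace ℝ (Fin d) => (q.1 + τ) ^ (-k)) q :=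
        (Real.contDiffAt_rpow_const_of_ne hT.ne').comp (g := fun s : ℝ => s ^ (-k)) q hbase
      have hB : ContDiffAt ℝ (⊤ : WithTop ℕ∞)
          (fun q : ℝ × EuclideanSpace ℝ (Fin d) => a ^ 2 - c * N q.2 * (q.1 + τ) ^ (-β)) q := by
        apply ContDiffAt.sub contDiffAt_const
        apply ContDiffAt.mul
        · exact contDiffAt_const.mul ((hNsmooth.comp contDiff_snd).contDiffAt)
        · exact (Real.contDiffAt_rpow_const_of_ne hT.ne').comp q hbase
      exact (hA.mul (hB.rpow_const_of_ne hq.2.ne')).of_le le_top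
    · intro q hq
      exact hSU q hq
  constructor
  · -- positivity
    intro q hq
    have hT : 0 < q.1 + τ := by linarith [hq.1]
    rw [hu, max_eq_left hq.2.le]
    exact mul_pos (Real.rpow_pos_of_pos hT _) (Real.rpow_pos_of_pos hq.2 _)
  -- the PDE
  rintro ⟨t, x⟩ hq
  obtain ⟨ht0, hbr⟩ := hq
  have ht0' : (0:ℝ) ≤ t := ht0
  have hbr' : 0 < a ^ 2 - c * ‖x‖ ^ 2 * (t + τ) ^ (-β) := hbr
  have hT : 0 < t + τ := by linarith
  set T : ℝ := t + τ with hTdef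
  have hbrN : 0 < a ^ 2 - c * N x * T ^ (-β) := by rwa [hnorm] at hbr'
  set r : ℝ := N x with hrdef
  set B0 : ℝ := a ^ 2 - c * r * T ^ (-β) with hB0def
  have hB0 : 0 < B0 := hbrN
  -- time derivative
  have hev : (fun s => u s x) =ᶠ[𝓝 t]
      fun s => (s + τ) ^ (-k) * (a ^ 2 - c * r * (s + τ) ^ (-β)) ^ q' := by
    have hWopen : IsOpen {s : ℝ | ((s, x) : ℝ × EuclideanSpace ℝ (Fin d)) ∈ U} :=
      hUopen.preimage (continuous_id.prodMk continuous_const)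
    have hmem : {s : ℝ | ((s, x) : ℝ × EuclideanSpace ℝ (Fin d)) ∈ U} ∈ 𝓝 t :=
      hWopen.mem_nhds (hSU (t, x) ⟨ht0', hbr'⟩)
    filter_upwards [hmem] with s hs
    exact hug (s, x) hs
  have hDt : HasDerivAt (fun s : ℝ => (s + τ) ^ (-k) * (a ^ 2 - c * r * (s + τ) ^ (-β)) ^ q')
      ((1 * (-k) * T ^ (-k - 1)) * B0 ^ q' +
        T ^ (-k) * ((-(c * r * (1 * (-β) * T ^ (-β - 1)))) * q' * B0 ^ (q' - 1))) t := by
    have hd1 : HasDerivAt (fun s : ℝ => s + τ) 1 t := (hasDerivAt_id t).add_const τ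
    have hd2 : HasDerivAt (fun s : ℝ => (s + τ) ^ (-k)) (1 * (-k) * T ^ (-k - 1)) t :=
      hd1.rpow_const (Or.inl hT.ne')
    have hd3 : HasDerivAt (fun s : ℝ => (s + τ) ^ (-β)) (1 * (-β) * T ^ (-β - 1)) t :=
      hd1.rpow_const (Or.inl hT.ne')
    have hd4 : HasDerivAt (fun s : ℝ => a ^ 2 - c * r * (s + τ) ^ (-β))
        (-(c * r * (1 * (-β) * T ^ (-β - 1)))) t := (hd3.const_mul (c * r)).const_sub (a ^ 2)
    have hd5 := hd4.rpow_const (p := q') (Or.inl hB0.ne')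
    exact hd2.mul hd5
  have hLHS : deriv (fun s => u s x) t = (1 * (-k) * T ^ (-k - 1)) * B0 ^ q' +
        T ^ (-k) * ((-(c * r * (1 * (-β) * T ^ (-β - 1)))) * q' * B0 ^ (q' - 1)) := by
    rw [hev.deriv_eq]; exact hDt.deriv
  -- space derivatives
  set V : Set (EuclideanSpace ℝ (Fin d)) := {y | 0 < a ^ 2 - c * N y * T ^ (-β)} with hVdef
  have hVopen : IsOpen V := by
    apply isOpen_lt continuous_const
    exact continuous_const.sub ((continuous_const.mul hNcont).mul continuous_const)
  have hxV : x ∈ V := hbrN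
  have huV : ∀ y ∈ V, u t y ^ m = T ^ ((-k) * m) * (a ^ 2 - c * N y * T ^ (-β)) ^ p := by
    intro y hy
    have hy' : (0:ℝ) < a ^ 2 - c * N y * T ^ (-β) := hy
    rw [hu, hnorm, max_eq_left hy'.le,
      Real.mul_rpow (Real.rpow_nonneg hT.le _) (Real.rpow_nonneg hy'.le _),
      ← Real.rpow_mul hT.le, ← Real.rpow_mul hy'.le, hq'm]
  set ψv : ℝ → ℝ := fun w => T ^ ((-k) * m) *
      ((-(c * 1 * T ^ (-β))) * p * (a ^ 2 - c * w * T ^ (-β)) ^ (p - 1)) with hψdef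
  have hφ : ∀ w : ℝ, 0 < a ^ 2 - c * w * T ^ (-β) →
      HasDerivAt (fun w : ℝ => T ^ ((-k) * m) * (a ^ 2 - c * w * T ^ (-β)) ^ p) (ψv w) w := by
    intro w hw
    have h1 : HasDerivAt (fun w : ℝ => c * w * T ^ (-β)) (c * 1 * T ^ (-β)) w :=
      ((hasDerivAt_id w).const_mul c).mul_const (T ^ (-β))
    exact ((h1.const_sub (a ^ 2)).rpow_const (Or.inl hw.ne')).const_mul _
  have hufd : ∀ y ∈ V, HasFDerivAt (fun z => u t z ^ m) (ψv (N y) • L y) y := by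
    intro y hy
    have h2 := (hφ (N y) hy).comp_hasFDerivAt y (hNfd y)
    apply h2.congr_of_eventuallyEq
    filter_upwards [hVopen.mem_nhds hy] with z hz
    simpa [Function.comp] using huV z hz
  have hinner : ∀ (j : Fin d), ∀ y ∈ V,
      fderiv ℝ (fun z => u t z ^ m) y (EuclideanSpace.single j 1) = ψv (N y) * (2 * y j) := by
    intro j y hy
    rw [(hufd y hy).fderiv, ContinuousLinearMap.smul_apply, happly]
    simp [smul_eq_mul]
  set Ψ' : ℝ := T ^ ((-k) * m) * ((-(c * 1 * T ^ (-β))) * p *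
      ((-(c * 1 * T ^ (-β))) * (p - 1) * B0 ^ (p - 1 - 1))) with hΨdef
  have hψd : HasDerivAt ψv Ψ' r := by
    have h1 : HasDerivAt (fun w : ℝ => c * w * T ^ (-β)) (c * 1 * T ^ (-β)) r :=
      ((hasDerivAt_id r).const_mul c).mul_const (T ^ (-β))
    have h2 := ((h1.const_sub (a ^ 2)).rpow_const (p := p - 1) (Or.inl hB0.ne')).const_mul
      ((-(c * 1 * T ^ (-β))) * p)
    exact h2.const_mul _
  have houter : ∀ j : Fin d, HasFDerivAt (fun y : EuclideanSpace ℝ (Fin d) => ψv (N y) * (2 * y j))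
      ((ψv r) • ((2:ℝ) • (EuclideanSpace.proj (𝕜 := ℝ) j)) + (2 * x j) • (Ψ' • L x)) x := by
    intro j
    have hc1 : HasFDerivAt (fun y : EuclideanSpace ℝ (Fin d) => ψv (N y)) (Ψ' • L x) x :=
      hψd.comp_hasFDerivAt (h₂ := ψv) x (hNfd x)
    have hc2 : HasFDerivAt (fun y : EuclideanSpace ℝ (Fin d) => 2 * y j)
        ((2:ℝ) • (EuclideanSpace.proj (𝕜 := ℝ) j)) x :=
      ((EuclideanSpace.proj (𝕜 := ℝ) j).hasFDerivAt).const_mul 2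
    exact hc1.mul hc2
  have houter_eval : ∀ j : Fin d,
      fderiv ℝ (fun y => fderiv ℝ (fun z => u t z ^ m) y (EuclideanSpace.single j 1)) x
        (EuclideanSpace.single j 1) = ψv r * 2 + 2 * x j * (Ψ' * (2 * x j)) := by
    intro j
    have heq : (fun y => fderiv ℝ (fun z => u t z ^ m) y (EuclideanSpace.single j 1)) =ᶠ[𝓝 x]
        (fun y => ψv (N y) * (2 * y j)) := by
      filter_upwards [hVopen.mem_nhds hxV] with z hz
      exact hinner j z hz
    rw [heq.fderiv_eq, (houter j).fderiv]
    have hproj : (EuclideanSpace.proj (𝕜 := ℝ) j) (EuclideanSpace.single j 1) = 1 := by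
      simp [EuclideanSpace.single_apply]
    simp only [ContinuousLinearMap.add_apply, ContinuousLinearMap.smul_apply, smul_eq_mul]
    rw [happly, hproj]
    ring
  have hrsum : ∑ j : Fin d, x j ^ 2 = r := rfl
  have hsum : ∑ j : Fin d, (ψv r * 2 + 2 * x j * (Ψ' * (2 * x j)))
      = (d : ℝ) * (ψv r * 2) + 4 * Ψ' * r := by
    rw [Finset.sum_add_distrib, Finset.sum_const, Finset.card_univ, Fintype.card_fin]
    have hterm : ∑ j : Fin d, 2 * x j * (Ψ' * (2 * x j)) = 4 * Ψ' * ∑ j : Fin d, x j ^ 2 := by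
      rw [Finset.mul_sum]
      exact Finset.sum_congr rfl fun j _ => by ring
    rw [hterm, hrsum, nsmul_eq_mul]
  have hRHS : ∑ j : Fin d, fderiv ℝ (fun y => fderiv ℝ (fun z => u t z ^ m) y
        (EuclideanSpace.single j 1)) x (EuclideanSpace.single j 1)
      = (d : ℝ) * (ψv r * 2) + 4 * Ψ' * r := by
    rw [Finset.sum_congr rfl fun j _ => houter_eval j]
    exact hsum
  rw [hLHS, hRHS]
  -- final algebraic identity
  have hXY : T ^ (-k) * T ^ (-β - 1) = T ^ (-k - 1) * T ^ (-β) := by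
    rw [← Real.rpow_add hT, ← Real.rpow_add hT]; congr 1; ring
  have hX1 : T ^ ((-k) * m) * T ^ (-β) = T ^ (-k - 1) := by
    rw [← Real.rpow_add hT, id3]
  have heB : B0 ^ q' = B0 ^ (q' - 1) * B0 := by
    rw [← Real.rpow_add_one hB0.ne' (q' - 1)]
    congr 1
    ring
  rw [hψdef, hΨdef]
  simp only []
  rw [hpq, heB]
  linear_combination (c * β * q' * r * B0 ^ (q' - 1)) * hXY +
    (2 * (d:ℝ) * c * p * B0 ^ (q' - 1) * B0 - 4 * c ^ 2 * p * q' * r * T ^ (-β) * B0 ^ (q' - 1)) * hX1 +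
    (-(T ^ (-k - 1) * B0 ^ (q' - 1) * B0)) * id1 +
    (c * q' * r * T ^ (-k - 1) * T ^ (-β) * B0 ^ (q' - 1)) * id2
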